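/- arXiv:2004.03230 — 3 statements merged into one kernel-verified Lean document; each statement's English description precedes it below -/
import Mathlib

section
/- For every $\lambda \in [0,2]$ we have $\arccos(1-\lambda)^2 \leq \frac{\pi^2}{2}\lambda$. -/
/-- For every λ ∈ [0,2], arccos(1-λ)² ≤ (π²/2)·λ. -/
theorem stmt2 : ∀ l : ℝ, l ∈ Set.Icc (0 : ℝ) 2 →
    (Real.arccos (1 - l)) ^ 2 ≤ Real.pi ^ 2 / 2 * l := by
  intro l hl
  obtain ⟨h0, h2⟩ := hl
  set θ := Real.arccos (1 - l) with hθ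
  have hθ0 : 0 ≤ θ := Real.arccos_nonneg _
  have hθπ : θ ≤ Real.pi := Real.arccos_le_pi _
  have hcos : Real.cos θ = 1 - l := Real.cos_arccos (by linarith) (by linarith)
  have h1 : Real.cos (2*(θ/2)) = 2 * Real.cos (θ/2)^2 - 1 := Real.cos_two_mul _
  have h2 : Real.sin (θ/2)^2 + Real.cos (θ/2)^2 = 1 := Real.sin_sq_add_cos_sq _
  have h3 : 2*(θ/2) = θ := by ring
  rw [h3, hcos] at h1
  have hl' : l = 2 * Real.sin (θ/2) ^ 2 := by linarith
  have hj : 2 / Real.pi * (θ/2) ≤ Real.sin (θ/2) :=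
    Real.mul_le_sin (by linarith) (by linarith)
  have hπ : 0 < Real.pi := Real.pi_pos
  have hs0 : 0 ≤ Real.sin (θ/2) := le_trans (by positivity) hj
  have key : θ / Real.pi ≤ Real.sin (θ/2) := by
    have : 2 / Real.pi * (θ/2) = θ / Real.pi := by field_simp
    linarith [hj, this.symm.le]
  have : (θ / Real.pi) ^ 2 ≤ Real.sin (θ/2) ^ 2 := by
    apply pow_le_pow_left₀ (by positivity) key
  rw [hl']
  rw [div_pow] at this
  have hπ2 : 0 < Real.pi ^ 2 := by positivity
  calc θ ^ 2 = Real.pi ^ 2 * (θ^2 / Real.pi^2) := by field_simp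
    _ ≤ Real.pi ^ 2 * Real.sin (θ/2) ^ 2 := by
        exact mul_le_mul_of_nonneg_left this hπ2.le
    _ = Real.pi ^ 2 / 2 * (2 * Real.sin (θ/2) ^ 2) := by ring
end

section
/- There is no constant $C > 0$ such that $\frac{a+3}{a} \leq C \cdot \frac{3}{3+a}$ holds for all $a \geq 1$. Consequently, the bound $\lambda_2(\mathcal{L}_{m,\mu}) \leq C \frac{d^{\mu}_{\max}}{m(V)}$ fails for the family of weighted complete graphs $K_4$ with $m(v_1)=a$, $m(v_j)=1$ ($j\neq 1$), $\mu \equiv 1$, as $a \to \infty$. -/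
/-- There is no constant C > 0 with (a+3)/a ≤ C·3/(3+a) for all a ≥ 1. -/
theorem stmt9 : ¬ ∃ C : ℝ, 0 < C ∧ ∀ a : ℝ, 1 ≤ a → (a + 3) / a ≤ C * (3 / (3 + a)) := by
  rintro ⟨C, hC, h⟩
  have ha : (1:ℝ) ≤ 3*C + 3 := by nlinarith
  have := h (3*C + 3) ha
  have h1 : (0:ℝ) < 3*C + 3 := by linarith
  have h2 : (0:ℝ) < 3 + (3*C + 3) := by linarith
  rw [mul_div_assoc'] at this
  have key := (div_le_div_iff₀ h1 h2).mp this
  nlinarith [key]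
end

section
/- Let $G = (V_G, E_G)$ be a finite simple graph with edge weight $\omega : E_G \to (0,\infty)$, and let $G'$ be its subdivision graph obtained by adding one new vertex on every edge, with weight $\omega'$ assigning to each half-edge the weight of the original edge. If $\lambda \in [0,2] \setminus \{1\}$, then $\lambda$ is an eigenvalue of the weighted normalized Laplacian $\mathcal{L}_{\mathrm{norm}}^{\omega'}$ of $G'$ if and only if $4\lambda - 2\lambda^2$ is an eigenvalue of $\mathcal{L}_{\mathrm{norm}}^{\omega}$ of $G$; moreover the multiplicities agree. -/
/-- Weighted degree of a vertex: sum of the weights of incident edges. -/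
noncomputable def degW {V : Type*} [Fintype V] [DecidableEq V] (G : SimpleGraph V)
    [DecidableRel G.Adj] (ω : Sym2 V → ℝ) (v : V) : ℝ :=
  ∑ e ∈ G.incidenceFinset v, ω e

/-- Matrix of the weighted normalized Laplacian of G. -/
noncomputable def normLapMatrix {V : Type*} [Fintype V] [DecidableEq V] (G : SimpleGraph V)
    [DecidableRel G.Adj] (ω : Sym2 V → ℝ) : Matrix V V ℂ :=
  Matrix.of fun v u =>
    if v = u then 1 else if G.Adj v u then -((ω s(v, u) / degW G ω v : ℝ) : ℂ) else 0

/-- Matrix of the weighted normalized Laplacian of the subdivision graph G' (one new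
vertex on each edge, each half-edge inheriting the weight of its edge); the vertex set of
G' is V ⊕ edges of G. The new vertex on e has weighted degree 2ω(e), so its two
off-diagonal entries are -1/2. -/
noncomputable def subNormLapMatrix {V : Type*} [Fintype V] [DecidableEq V] (G : SimpleGraph V)
    [DecidableRel G.Adj] (ω : Sym2 V → ℝ) :
    Matrix (V ⊕ G.edgeFinset) (V ⊕ G.edgeFinset) ℂ :=
  Matrix.of fun x y =>
    match x, y with
    | Sum.inl v, Sum.inl u => if v = u then 1 else 0
    | Sum.inl v, Sum.inr e => if v ∈ (e : Sym2 V) then -((ω e / degW G ω v : ℝ) : ℂ) else 0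
    | Sum.inr e, Sum.inl v => if v ∈ (e : Sym2 V) then -(1 / 2 : ℂ) else 0
    | Sum.inr e, Sum.inr e' => if e = e' then 1 else 0


open Finset Module

namespace Stmt12Aux

variable {V : Type*} [Fintype V] [DecidableEq V] (G : SimpleGraph V)
    [DecidableRel G.Adj] (ω : Sym2 V → ℝ)

/-- Sum of a function over the vertices of an unordered pair. -/
noncomputable def S (f : V → ℂ) (e : Sym2 V) : ℂ :=
  ∑ u ∈ Finset.univ.filter (· ∈ e), f u

lemma S_mk (f : V → ℂ) {a b : V} (h : a ≠ b) : S f s(a, b) = f a + f b := by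
  unfold S
  have : Finset.univ.filter (· ∈ s(a, b)) = {a, b} := by
    ext u; simp [Sym2.mem_iff]
  rw [this, Finset.sum_pair h]

lemma S_add (f g : V → ℂ) (e : Sym2 V) : S (f + g) e = S f e + S g e := by
  simp [S, Finset.sum_add_distrib]

lemma S_smul (c : ℂ) (f : V → ℂ) (e : Sym2 V) : S (c • f) e = c * S f e := by
  simp [S, Finset.mul_sum]

lemma sum_incidence (v : V) (F : Sym2 V → ℂ) :
    ∑ e ∈ G.incidenceFinset v, F e = ∑ u ∈ G.neighborFinset v, F s(v, u) := by
  have himg : G.incidenceFinset v = (G.neighborFinset v).image (fun u => s(v, u)) := by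
    ext e
    simp only [SimpleGraph.mem_incidenceFinset, Finset.mem_image,
      SimpleGraph.mem_neighborFinset]
    constructor
    · rintro ⟨he, hv⟩
      induction e using Sym2.ind with
      | _ a b =>
        rw [SimpleGraph.mem_edgeSet] at he
        rw [Sym2.mem_iff] at hv
        rcases hv with rfl | rfl
        · exact ⟨b, he, rfl⟩
        · exact ⟨a, he.symm, Sym2.eq_swap⟩
    · rintro ⟨u, hu, rfl⟩
      exact ⟨by rw [SimpleGraph.mem_edgeSet]; exact hu, Sym2.mem_mk_left v u⟩
  rw [himg, Finset.sum_image]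
  intro u hu u' hu' h
  rw [Sym2.eq_iff] at h
  rcases h with ⟨-, h⟩ | ⟨h1, h2⟩
  · exact h
  · exact h2.trans h1

lemma degW_pos (hω : ∀ e ∈ G.edgeFinset, 0 < ω e) (hdeg : ∀ v, 0 < G.degree v) (v : V) :
    0 < degW G ω v := by
  unfold degW
  apply Finset.sum_pos
  · intro e he
    apply hω
    rw [SimpleGraph.incidenceFinset_eq_filter] at he
    exact (Finset.mem_filter.mp he).1
  · rw [← Finset.card_pos, SimpleGraph.card_incidenceFinset_eq_degree]
    exact hdeg v

lemma degW_eq (v : V) :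
    ((degW G ω v : ℝ) : ℂ) = ∑ u ∈ G.neighborFinset v, ((ω s(v, u) : ℝ) : ℂ) := by
  unfold degW
  push_cast
  exact sum_incidence G v (fun e => ((ω e : ℝ) : ℂ))

lemma L_row (f : V → ℂ) (v : V) :
    (normLapMatrix G ω).mulVec f v =
      f v - (((degW G ω v : ℝ) : ℂ))⁻¹ *
        ∑ u ∈ G.neighborFinset v, ((ω s(v, u) : ℝ) : ℂ) * f u := by
  have step1 : (normLapMatrix G ω).mulVec f v =
      (∑ u : V, if v = u then f u else 0) +
      ∑ u : V, (if G.Adj v u then -(((ω s(v, u) / degW G ω v : ℝ) : ℂ)) * f u else 0) := by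
    rw [← Finset.sum_add_distrib]
    unfold Matrix.mulVec dotProduct normLapMatrix
    apply Finset.sum_congr rfl
    intro u _
    by_cases h : v = u
    · subst h; simp [G.irrefl]
    · by_cases h2 : G.Adj v u <;> simp [h, h2]
  rw [step1, Finset.sum_ite_eq, if_pos (Finset.mem_univ v)]
  rw [← Finset.sum_filter, ← SimpleGraph.neighborFinset_eq_filter]
  rw [Finset.sum_congr rfl (g := fun u =>
      -((((degW G ω v : ℝ) : ℂ))⁻¹ * (((ω s(v, u) : ℝ) : ℂ) * f u))) (fun u _ => by
    push_cast
    ring)]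
  rw [Finset.sum_neg_distrib, ← Finset.mul_sum]
  ring

lemma M_row_inl (x : (V ⊕ G.edgeFinset) → ℂ) (v : V) :
    (subNormLapMatrix G ω).mulVec x (Sum.inl v) =
      x (Sum.inl v) - (((degW G ω v : ℝ) : ℂ))⁻¹ *
        ∑ b : G.edgeFinset,
          (if v ∈ (b : Sym2 V) then ((ω b : ℝ) : ℂ) * x (Sum.inr b) else 0) := by
  unfold Matrix.mulVec dotProduct
  rw [Fintype.sum_sum_type]
  have h1 : (∑ a : V, subNormLapMatrix G ω (Sum.inl v) (Sum.inl a) * x (Sum.inl a)) =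
      x (Sum.inl v) := by
    rw [Finset.sum_congr rfl (g := fun (a : V) => if v = a then x (Sum.inl a) else 0)
      (fun a _ => by by_cases h : v = a <;> simp [subNormLapMatrix, h])]
    rw [Finset.sum_ite_eq, if_pos (Finset.mem_univ v)]
  have h2 : (∑ b : G.edgeFinset, subNormLapMatrix G ω (Sum.inl v) (Sum.inr b) * x (Sum.inr b)) =
      -((((degW G ω v : ℝ) : ℂ))⁻¹ *
        ∑ b : G.edgeFinset,
          (if v ∈ (b : Sym2 V) then ((ω b : ℝ) : ℂ) * x (Sum.inr b) else 0)) := by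
    rw [Finset.sum_congr rfl (g := fun (b : G.edgeFinset) => -((((degW G ω v : ℝ) : ℂ))⁻¹ *
        (if v ∈ (b : Sym2 V) then ((ω b : ℝ) : ℂ) * x (Sum.inr b) else 0))) (fun b _ => by
      by_cases h : v ∈ (b : Sym2 V)
      · simp only [subNormLapMatrix, Matrix.of_apply, if_pos h]
        push_cast
        ring
      · simp [subNormLapMatrix, h])]
    rw [Finset.sum_neg_distrib, ← Finset.mul_sum]
  rw [h1, h2]
  ring

lemma M_row_inr (x : (V ⊕ G.edgeFinset) → ℂ) (b : G.edgeFinset) :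
    (subNormLapMatrix G ω).mulVec x (Sum.inr b) =
      x (Sum.inr b) - (1 / 2 : ℂ) * S (x ∘ Sum.inl) (b : Sym2 V) := by
  unfold Matrix.mulVec dotProduct
  rw [Fintype.sum_sum_type]
  have h2 : (∑ b' : G.edgeFinset, subNormLapMatrix G ω (Sum.inr b) (Sum.inr b') * x (Sum.inr b')) =
      x (Sum.inr b) := by
    rw [Finset.sum_congr rfl (g := fun (b' : G.edgeFinset) => if b = b' then x (Sum.inr b') else 0)
      (fun b' _ => by by_cases h : b = b' <;> simp [subNormLapMatrix, h])]
    rw [Finset.sum_ite_eq, if_pos (Finset.mem_univ b)]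
  have h1 : (∑ a : V, subNormLapMatrix G ω (Sum.inr b) (Sum.inl a) * x (Sum.inl a)) =
      -((1 / 2 : ℂ) * S (x ∘ Sum.inl) (b : Sym2 V)) := by
    rw [Finset.sum_congr rfl (g := fun (a : V) => -((1 / 2 : ℂ) *
        (if a ∈ (b : Sym2 V) then x (Sum.inl a) else 0))) (fun a _ => by
      by_cases h : a ∈ (b : Sym2 V) <;> simp [subNormLapMatrix, h])]
    rw [Finset.sum_neg_distrib, ← Finset.mul_sum]
    unfold S
    rw [Finset.sum_filter]
    rfl
  rw [h1, h2]
  ring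

lemma sum_subtype_ite (v : V) (F : Sym2 V → ℂ) :
    (∑ b : G.edgeFinset, (if v ∈ (b : Sym2 V) then F b else 0)) =
      ∑ e ∈ G.incidenceFinset v, F e := by
  rw [Finset.sum_coe_sort G.edgeFinset (fun e => if v ∈ e then F e else 0)]
  rw [← Finset.sum_filter, ← SimpleGraph.incidenceFinset_eq_filter]

lemma calc1 (lam fv t : ℂ) (h1 : (1 : ℂ) - lam ≠ 0) :
    fv - (2 * (1 - lam))⁻¹ * (fv + t) = lam * fv ↔
      fv - t = (4 * lam - 2 * lam ^ 2) * fv := by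
  have h2 : (2 * ((1 : ℂ) - lam)) ≠ 0 := mul_ne_zero two_ne_zero h1
  have hc : (2 * (1 - lam)) * (2 * (1 - lam))⁻¹ = 1 := mul_inv_cancel₀ h2
  constructor
  · intro h
    have h' : (2 * (1 - lam)) * (fv - (2 * (1 - lam))⁻¹ * (fv + t)) =
        (2 * (1 - lam)) * (lam * fv) := by rw [h]
    linear_combination h' + (fv + t) * hc
  · intro h
    linear_combination (2 * (1 - lam))⁻¹ * h - (1 - lam) * fv * hc

lemma calc2 (lam g s : ℂ) (h1 : (1 : ℂ) - lam ≠ 0) :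
    g - (1 / 2 : ℂ) * s = lam * g ↔ g = (2 * (1 - lam))⁻¹ * s := by
  have h2 : (2 * ((1 : ℂ) - lam)) ≠ 0 := mul_ne_zero two_ne_zero h1
  rw [inv_mul_eq_div, eq_div_iff h2]
  constructor
  · intro h
    linear_combination 2 * h
  · intro h
    linear_combination h / 2

end Stmt12Aux


set_option maxHeartbeats 1000000 in
/-- Spectral correspondence under subdivision: for λ ∈ [0,2] \ {1}, λ is an eigenvalue of
the normalized Laplacian of the subdivision graph G' iff 4λ - 2λ² is an eigenvalue of the
normalized Laplacian of G, and the multiplicities (eigenspace dimensions) agree. -/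
theorem stmt12 {V : Type*} [Fintype V] [DecidableEq V] (G : SimpleGraph V)
    [DecidableRel G.Adj] (ω : Sym2 V → ℝ) (hω : ∀ e ∈ G.edgeFinset, 0 < ω e)
    (hdeg : ∀ v, 0 < G.degree v)
    (lam : ℝ) (hlam : lam ∈ Set.Icc (0 : ℝ) 2) (hlam1 : lam ≠ 1) :
    (Module.End.HasEigenvalue (Matrix.toLin' (subNormLapMatrix G ω)) ((lam : ℂ)) ↔
      Module.End.HasEigenvalue (Matrix.toLin' (normLapMatrix G ω))
        (((4 * lam - 2 * lam ^ 2 : ℝ) : ℂ))) ∧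
    Module.finrank ℂ
        (Module.End.eigenspace (Matrix.toLin' (subNormLapMatrix G ω)) ((lam : ℂ))) =
      Module.finrank ℂ
        (Module.End.eigenspace (Matrix.toLin' (normLapMatrix G ω))
          (((4 * lam - 2 * lam ^ 2 : ℝ) : ℂ))) := by
  classical
  open Stmt12Aux in
  have hl1 : (1 : ℂ) - (lam : ℂ) ≠ 0 := by
    rw [sub_ne_zero]
    exact fun h => hlam1 (by exact_mod_cast h.symm)
  have hmu : (((4 * lam - 2 * lam ^ 2 : ℝ)) : ℂ) = 4 * (lam : ℂ) - 2 * (lam : ℂ) ^ 2 := by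
    push_cast; ring
  have hD : ∀ v, (((degW G ω v : ℝ)) : ℂ) ≠ 0 := fun v => by
    exact_mod_cast ne_of_gt (Stmt12Aux.degW_pos G ω hω hdeg v)
  set c : ℂ := (2 * (1 - (lam : ℂ)))⁻¹ with hcdef
  -- membership characterization for the subdivision Laplacian
  have mem_iff : ∀ x : (V ⊕ G.edgeFinset) → ℂ,
      x ∈ Module.End.eigenspace (Matrix.toLin' (subNormLapMatrix G ω)) ((lam : ℂ)) ↔
        ((x ∘ Sum.inl) ∈ Module.End.eigenspace (Matrix.toLin' (normLapMatrix G ω))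
            (((4 * lam - 2 * lam ^ 2 : ℝ) : ℂ)) ∧
          ∀ b : G.edgeFinset, x (Sum.inr b) = c * Stmt12Aux.S (x ∘ Sum.inl) (b : Sym2 V)) := by
    intro x
    rw [Module.End.mem_eigenspace_iff, Module.End.mem_eigenspace_iff, Matrix.toLin'_apply,
      Matrix.toLin'_apply, funext_iff, funext_iff]
    simp only [Pi.smul_apply, smul_eq_mul]
    rw [Sum.forall]
    have main_row : ∀ (_ : ∀ b : G.edgeFinset,
        x (Sum.inr b) = c * Stmt12Aux.S (x ∘ Sum.inl) (b : Sym2 V)) (v : V),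
        ((subNormLapMatrix G ω).mulVec x (Sum.inl v) = (lam : ℂ) * x (Sum.inl v)) ↔
        ((normLapMatrix G ω).mulVec (x ∘ Sum.inl) v =
          ((4 * lam - 2 * lam ^ 2 : ℝ) : ℂ) * (x ∘ Sum.inl) v) := by
      intro hg v
      rw [Stmt12Aux.M_row_inl, Stmt12Aux.L_row]
      set f := x ∘ Sum.inl with hf
      set T := ∑ u ∈ G.neighborFinset v, ((ω s(v, u) : ℝ) : ℂ) * f u with hT
      have hsum : (∑ b : G.edgeFinset,
          (if v ∈ (b : Sym2 V) then ((ω (b : Sym2 V) : ℝ) : ℂ) * x (Sum.inr b) else 0)) =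
          c * (((degW G ω v : ℝ) : ℂ) * f v + T) := by
        calc (∑ b : G.edgeFinset,
            (if v ∈ (b : Sym2 V) then ((ω (b : Sym2 V) : ℝ) : ℂ) * x (Sum.inr b) else 0))
            = ∑ b : G.edgeFinset, (if v ∈ (b : Sym2 V) then
                ((ω (b : Sym2 V) : ℝ) : ℂ) * (c * Stmt12Aux.S f (b : Sym2 V)) else 0) := by
              apply Finset.sum_congr rfl
              intro b _
              by_cases h : v ∈ (b : Sym2 V) <;> simp [h, hg b]
          _ = ∑ e ∈ G.incidenceFinset v, ((ω e : ℝ) : ℂ) * (c * Stmt12Aux.S f e) :=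
              Stmt12Aux.sum_subtype_ite G v
                (fun e => ((ω e : ℝ) : ℂ) * (c * Stmt12Aux.S f e))
          _ = ∑ u ∈ G.neighborFinset v,
                ((ω s(v, u) : ℝ) : ℂ) * (c * Stmt12Aux.S f s(v, u)) :=
              Stmt12Aux.sum_incidence G v
                (fun e => ((ω e : ℝ) : ℂ) * (c * Stmt12Aux.S f e))
          _ = ∑ u ∈ G.neighborFinset v, ((ω s(v, u) : ℝ) : ℂ) * (c * (f v + f u)) := by
              apply Finset.sum_congr rfl
              intro u hu
              have hadj : G.Adj v u := by rwa [SimpleGraph.mem_neighborFinset] at hu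
              rw [Stmt12Aux.S_mk f hadj.ne]
          _ = c * ((∑ u ∈ G.neighborFinset v, ((ω s(v, u) : ℝ) : ℂ)) * f v + T) := by
              rw [hT, mul_add, Finset.sum_mul, Finset.mul_sum, Finset.mul_sum,
                ← Finset.sum_add_distrib]
              apply Finset.sum_congr rfl
              intro u _
              ring
          _ = c * (((degW G ω v : ℝ) : ℂ) * f v + T) := by
              rw [← Stmt12Aux.degW_eq]
      rw [hsum]
      have hrw : (((degW G ω v : ℝ) : ℂ))⁻¹ *
          (c * (((degW G ω v : ℝ) : ℂ) * f v + T)) =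
          c * (f v + (((degW G ω v : ℝ) : ℂ))⁻¹ * T) := by
        have hDv : (((degW G ω v : ℝ) : ℂ))⁻¹ * ((degW G ω v : ℝ) : ℂ) = 1 :=
          inv_mul_cancel₀ (hD v)
        linear_combination (c * f v) * hDv
      rw [hrw, hmu, hcdef]
      exact Stmt12Aux.calc1 (lam : ℂ) (f v) ((((degW G ω v : ℝ) : ℂ))⁻¹ * T) hl1
    have hR : (∀ b : G.edgeFinset,
        (subNormLapMatrix G ω).mulVec x (Sum.inr b) = (lam : ℂ) * x (Sum.inr b)) ↔
        (∀ b : G.edgeFinset, x (Sum.inr b) = c * Stmt12Aux.S (x ∘ Sum.inl) (b : Sym2 V)) := by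
      apply forall_congr'
      intro b
      rw [Stmt12Aux.M_row_inr, hcdef]
      exact Stmt12Aux.calc2 (lam : ℂ) _ _ hl1
    constructor
    · rintro ⟨hl, hr⟩
      have hg := hR.mp hr
      exact ⟨fun v => (main_row hg v).mp (hl v), hg⟩
    · rintro ⟨hl, hg⟩
      exact ⟨fun v => (main_row hg v).mpr (hl v), hR.mpr hg⟩
  -- the linear equivalence between the eigenspaces
  let Afun : (V → ℂ) → ((V ⊕ G.edgeFinset) → ℂ) := fun f =>
    Sum.elim f (fun b => c * Stmt12Aux.S f (b : Sym2 V))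
  have hAcomp : ∀ f : V → ℂ, (Afun f) ∘ Sum.inl = f := fun f => rfl
  let e : (Module.End.eigenspace (Matrix.toLin' (normLapMatrix G ω))
        (((4 * lam - 2 * lam ^ 2 : ℝ) : ℂ))) ≃ₗ[ℂ]
      (Module.End.eigenspace (Matrix.toLin' (subNormLapMatrix G ω)) ((lam : ℂ))) :=
    { toFun := fun f => ⟨Afun f.1, (mem_iff _).mpr ⟨by rw [hAcomp]; exact f.2, fun b => rfl⟩⟩
      map_add' := by
        intro f g
        apply Subtype.ext
        funext i
        cases i with
        | inl v => rfl
        | inr b =>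
          show c * Stmt12Aux.S (f.1 + g.1) _ = c * Stmt12Aux.S f.1 _ + c * Stmt12Aux.S g.1 _
          rw [Stmt12Aux.S_add]
          ring
      map_smul' := by
        intro a f
        apply Subtype.ext
        funext i
        cases i with
        | inl v => rfl
        | inr b =>
          show c * Stmt12Aux.S (a • f.1) _ = a * (c * Stmt12Aux.S f.1 _)
          rw [Stmt12Aux.S_smul]
          ring
      invFun := fun x => ⟨x.1 ∘ Sum.inl, ((mem_iff x.1).mp x.2).1⟩
      left_inv := by
        intro f
        apply Subtype.ext
        rfl
      right_inv := by
        intro x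
        apply Subtype.ext
        funext i
        cases i with
        | inl v => rfl
        | inr b => exact (((mem_iff x.1).mp x.2).2 b).symm }
  have hfr : Module.finrank ℂ
      (Module.End.eigenspace (Matrix.toLin' (subNormLapMatrix G ω)) ((lam : ℂ))) =
      Module.finrank ℂ (Module.End.eigenspace (Matrix.toLin' (normLapMatrix G ω))
        (((4 * lam - 2 * lam ^ 2 : ℝ) : ℂ))) := e.finrank_eq.symm
  refine ⟨?_, hfr⟩
  rw [Module.End.hasEigenvalue_iff, Module.End.hasEigenvalue_iff]
  have hbot : (Module.End.eigenspace (Matrix.toLin' (subNormLapMatrix G ω)) ((lam : ℂ))) = ⊥ ↔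
      (Module.End.eigenspace (Matrix.toLin' (normLapMatrix G ω))
        (((4 * lam - 2 * lam ^ 2 : ℝ) : ℂ))) = ⊥ := by
    rw [← Submodule.finrank_eq_zero, ← Submodule.finrank_eq_zero, hfr]
  exact not_congr hbot
end
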